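/- arXiv:1812.04892 — 5 statements merged into one kernel-verified Lean document; each statement's English description precedes it below -/
import Mathlib

section
/- Let q be a prime power, m,n positive integers with n ≤ m, and let g = (g_1,...,g_n) be a vector of elements of F_{q^m} that are linearly independent over F_q. Then for any positive integer s, the s×n Moore matrix whose (i,j) entry is g_j^{q^{i-1}} has rank min(s,n) over F_{q^m}. -/
open Polynomial

/-- Key lemma: a linear relation among the first `t ≤ n` Moore rows is trivial. -/
lemma moore_rows_aux (q n t : ℕ) (hq : IsPrimePow q)
    (Fq Fqm : Type) [Field Fq] [Fintype Fq] [Field Fqm] [Algebra Fq Fqm]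
    (hcard : Fintype.card Fq = q)
    (ht : t ≤ n) (g : Fin n → Fqm) (hg : LinearIndependent Fq g)
    (c : Fin t → Fqm) (hc : ∀ j, ∑ i : Fin t, c i * g j ^ q ^ (i : ℕ) = 0) :
    ∀ i, c i = 0 := by
  classical
  by_contra hne
  push_neg at hne
  obtain ⟨i₀, hi₀⟩ := hne
  have ht0 : 0 < t := i₀.pos
  have hq2 : 2 ≤ q := hq.two_le
  -- characteristic
  set p₀ := ringChar Fq with hp₀
  haveI : CharP Fq p₀ := ringChar.charP Fq
  obtain ⟨k, hk_prime, hkq⟩ := FiniteField.card Fq p₀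
  rw [hcard] at hkq
  haveI : Fact p₀.Prime := ⟨hk_prime⟩
  haveI : CharP Fqm p₀ := charP_of_injective_algebraMap (algebraMap Fq Fqm).injective p₀
  -- the Fq-linear map given by the linearized polynomial
  have hadd : ∀ x y : Fqm, ∀ i : ℕ, (x + y) ^ q ^ i = x ^ q ^ i + y ^ q ^ i := by
    intro x y i
    rw [hkq]
    simp only [← pow_mul]
    exact add_pow_char_pow ..
  have hsmul : ∀ (a : Fq) (x : Fqm), ∀ i : ℕ, (a • x) ^ q ^ i = a • x ^ q ^ i := by
    intro a x i
    rw [Algebra.smul_def, Algebra.smul_def, mul_pow, ← map_pow]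
    congr 2
    conv_lhs => rw [← hcard]
    exact FiniteField.pow_card_pow i a
  let L : Fqm →ₗ[Fq] Fqm :=
    { toFun := fun x => ∑ i : Fin t, c i * x ^ q ^ (i : ℕ)
      map_add' := by
        intro x y
        rw [← Finset.sum_add_distrib]
        refine Finset.sum_congr rfl fun i _ => ?_
        rw [hadd, mul_add]
      map_smul' := by
        intro a x
        simp only [RingHom.id_apply]
        rw [Finset.smul_sum]
        refine Finset.sum_congr rfl fun i _ => ?_
        rw [hsmul, mul_smul_comm] }
  set W := Submodule.span Fq (Set.range g) with hW
  have hWker : W ≤ LinearMap.ker L := by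
    rw [Submodule.span_le]
    rintro _ ⟨j, rfl⟩
    exact hc j
  -- the polynomial
  set P : Polynomial Fqm := ∑ i : Fin t, C (c i) * X ^ q ^ (i : ℕ) with hP
  have hinj : Function.Injective fun i : Fin t => q ^ (i : ℕ) := by
    intro a b hab
    exact Fin.ext (Nat.pow_right_injective hq2 hab)
  have hPne : P ≠ 0 := by
    intro h0
    have := congrArg (fun P => coeff P (q ^ (i₀ : ℕ))) h0
    simp only [hP, finset_sum_coeff, coeff_C_mul, coeff_X_pow, coeff_zero] at this
    rw [Finset.sum_eq_single i₀] at this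
    · simp at this; exact hi₀ this
    · intro b _ hb
      rw [if_neg, mul_zero]
      intro hbe
      exact hb (hinj hbe.symm)
    · intro h; exact absurd (Finset.mem_univ i₀) h
  have hPdeg : P.natDegree ≤ q ^ (t - 1) := by
    refine natDegree_sum_le_of_forall_le _ _ fun i _ => ?_
    refine (natDegree_C_mul_le _ _).trans ?_
    refine (natDegree_X_pow_le _).trans ?_
    exact Nat.pow_le_pow_right (by omega) (by omega)
  have heval : ∀ x : Fqm, P.eval x = L x := by
    intro x
    simp [hP, eval_finset_sum, L]
  -- every element of W is a root of P
  have hroot : ∀ x : Fqm, x ∈ W → x ∈ P.roots.toFinset := by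
    intro x hx
    rw [Multiset.mem_toFinset, mem_roots hPne]
    have := hWker hx
    rw [LinearMap.mem_ker] at this
    exact (heval x).trans this
  -- counting
  haveI : Module.Finite Fq W := by
    apply Module.Finite.span_of_finite
    exact Set.finite_range g
  haveI : Finite W := Module.finite_of_finite Fq
  haveI : Fintype W := Fintype.ofFinite W
  have hcardW : Fintype.card W = q ^ n := by
    rw [Module.card_eq_pow_finrank (K := Fq) (V := W), hcard, hW,
      finrank_span_eq_card hg, Fintype.card_fin]
  have hle : Fintype.card W ≤ P.roots.toFinset.card := by
    rw [← Fintype.card_coe]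
    apply Fintype.card_le_of_injective (fun x : W => (⟨x, hroot x x.2⟩ : P.roots.toFinset))
    intro a b hab
    exact Subtype.ext congr(Subtype.val $hab)
  have h2 : P.roots.toFinset.card ≤ P.natDegree :=
    (Multiset.toFinset_card_le _).trans (P.card_roots' )
  have : q ^ n ≤ q ^ (t - 1) := by omega
  have : q ^ (t - 1) < q ^ n := Nat.pow_lt_pow_right (by omega) (by omega)
  omega

/-- The s×n Moore matrix of a vector `g` over `F_{q^m}` whose entries are
linearly independent over `F_q` has rank `min s n` over `F_{q^m}`. -/
theorem moore_matrix_rank (q m n s : ℕ) (hq : IsPrimePow q)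
    (Fq Fqm : Type) [Field Fq] [Fintype Fq] [Field Fqm] [Algebra Fq Fqm]
    (hcard : Fintype.card Fq = q) (hfin : Module.finrank Fq Fqm = m)
    (hm : 0 < m) (hn : 0 < n) (hs : 0 < s) (hnm : n ≤ m)
    (g : Fin n → Fqm) (hg : LinearIndependent Fq g) :
    (Matrix.of fun (i : Fin s) (j : Fin n) => g j ^ q ^ (i : ℕ)).rank = min s n := by
  set M : Matrix (Fin s) (Fin n) Fqm :=
    Matrix.of fun (i : Fin s) (j : Fin n) => g j ^ q ^ (i : ℕ) with hM
  set t := min s n with htdef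
  have hts : t ≤ s := min_le_left s n
  have htn : t ≤ n := min_le_right s n
  refine le_antisymm (le_min ?_ ?_) ?_
  · simpa using M.rank_le_card_height
  · simpa using M.rank_le_card_width
  -- lower bound
  have hind : LinearIndependent Fqm (fun i : Fin t => M (Fin.castLE hts i)) := by
    rw [Fintype.linearIndependent_iff]
    intro c hc i
    refine moore_rows_aux q n t hq Fq Fqm hcard htn g hg c ?_ i
    intro j
    have := congrFun hc j
    simpa [M, Finset.sum_apply] using this
  rw [M.rank_eq_finrank_span_row]
  have h1 : Module.finrank Fqm
      (Submodule.span Fqm (Set.range fun i : Fin t => M (Fin.castLE hts i))) = t := by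
    rw [finrank_span_eq_card hind, Fintype.card_fin]
  have h2 : Submodule.span Fqm (Set.range fun i : Fin t => M (Fin.castLE hts i)) ≤
      Submodule.span Fqm (Set.range M) := by
    apply Submodule.span_mono
    rintro _ ⟨i, rfl⟩
    exact ⟨Fin.castLE hts i, rfl⟩
  calc t = _ := h1.symm
    _ ≤ _ := Submodule.finrank_mono h2
end

section
/- Let z_1,...,z_u ∈ F_{q^m}^n span an F_{q^m}-subspace of dimension ζ, and let s := n-k-w be a positive integer. Then the matrix Z̃ obtained by vertically stacking the s×n Moore matrices M_s(z_1),...,M_s(z_u) has rank over F_{q^m} at most ζ·s. In particular, if additionally each z_i lies in the row space (over F_q) of a fixed full-rank matrix with w rows, then rank(Z̃) ≤ min(ζ(n-k-w), w). -/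
open Submodule Module

/-- Rows in a span of `N` vectors bound the rank by the index cardinality. -/
lemma rank_le_of_rows_mem {K : Type} [Field K] {α : Type} [Fintype α] {n : Type} [Fintype n]
    {ι : Type} [Fintype ι] (M : Matrix α n K) (v : ι → n → K)
    (h : ∀ i, M i ∈ Submodule.span K (Set.range v)) : M.rank ≤ Fintype.card ι := by
  rw [Matrix.rank_eq_finrank_span_row]
  have hle : Submodule.span K (Set.range M) ≤ Submodule.span K (Set.range v) := by
    rw [Submodule.span_le]
    rintro x ⟨i, rfl⟩; exact h i
  refine le_trans (Submodule.finrank_mono hle) ?_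
  classical
  refine le_trans (finrank_span_le_card (Set.range v)) ?_
  rw [Set.toFinset_range]
  exact Finset.card_image_le.trans (by simp)

/-- If `z_1,...,z_u ∈ F_{q^m}^n` span a `ζ`-dimensional `F_{q^m}`-subspace and
`s := n-k-w > 0`, the vertical stack of the `s×n` Moore matrices `M_s(z_i)` has
`F_{q^m}`-rank at most `ζ·s`; if moreover each `z_i` lies in the row space of a fixed
full-rank matrix over `F_q` with `w` rows, the rank is at most `min (ζ(n-k-w)) w`. -/
theorem stacked_moore_rank_bound (q m n k w u ζ : ℕ)
    (Fq Fqm : Type) [Field Fq] [Fintype Fq] [Field Fqm] [Algebra Fq Fqm]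
    (hcard : Fintype.card Fq = q) (hfin : Module.finrank Fq Fqm = m)
    (hm : 0 < m) (hn : 0 < n) (hu : 0 < u) (hζ : 0 < ζ)
    (hw : w < n - k) (hs : 0 < n - k - w)
    (z : Fin u → Fin n → Fqm)
    (hz : Module.finrank Fqm (Submodule.span Fqm (Set.range z)) = ζ) :
    (Matrix.of fun (p : Fin u × Fin (n - k - w)) (j : Fin n) =>
        z p.1 j ^ q ^ (p.2 : ℕ)).rank ≤ ζ * (n - k - w) ∧
    (∀ B : Matrix (Fin w) (Fin n) Fq, B.rank = w →
      (∀ i, z i ∈ Submodule.span Fqm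
          (Set.range fun r : Fin w => fun j : Fin n => algebraMap Fq Fqm (B r j))) →
      (Matrix.of fun (p : Fin u × Fin (n - k - w)) (j : Fin n) =>
          z p.1 j ^ q ^ (p.2 : ℕ)).rank ≤ min (ζ * (n - k - w)) w) := by
  classical
  -- characteristic setup
  obtain ⟨p, hp⟩ := CharP.exists Fq
  haveI := hp
  haveI : Fact p.Prime := ⟨(CharP.char_is_prime Fq p)⟩
  obtain ⟨e, _, hq⟩ := FiniteField.card Fq p
  rw [hcard] at hq
  haveI : CharP Fqm p := charP_of_injective_algebraMap (algebraMap Fq Fqm).injective p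
  haveI : ExpChar Fqm p := .prime Fact.out
  -- sums commute with x ↦ x ^ q ^ t
  have hpow : ∀ (t : ℕ) {ι : Type} (s : Finset ι) (f : ι → Fqm),
      (∑ i ∈ s, f i) ^ q ^ t = ∑ i ∈ s, f i ^ q ^ t := by
    intro t ι s f
    rw [hq, ← pow_mul, sum_pow_char_pow]
  -- key: Frobenius powers of a vector in a span stay in the span of Frobenius powers
  have key : ∀ (N : ℕ) (v : Fin N → Fin n → Fqm) (x : Fin n → Fqm),
      x ∈ Submodule.span Fqm (Set.range v) → ∀ t : ℕ,
      (fun j => x j ^ q ^ t) ∈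
        Submodule.span Fqm (Set.range fun (l : Fin N) => fun j => v l j ^ q ^ t) := by
    intro N v x hx t
    obtain ⟨c, hc⟩ := (mem_span_range_iff_exists_fun Fqm).mp hx
    have hxe : (fun j => x j ^ q ^ t)
        = ∑ l : Fin N, (c l ^ q ^ t) • (fun j => v l j ^ q ^ t) := by
      funext j
      have : x j = ∑ l : Fin N, c l * v l j := by
        rw [← hc]; simp [Finset.sum_apply]
      rw [this, hpow]
      simp [Finset.sum_apply, mul_pow]
    rw [hxe]
    exact Submodule.sum_mem _ fun l _ =>
      Submodule.smul_mem _ _ (Submodule.subset_span ⟨l, rfl⟩)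
  set s := n - k - w with hsdef
  set M : Matrix (Fin u × Fin s) (Fin n) Fqm :=
    Matrix.of fun (p : Fin u × Fin s) (j : Fin n) => z p.1 j ^ q ^ (p.2 : ℕ) with hM
  -- Part 1
  have part1 : M.rank ≤ ζ * s := by
    haveI : Module.Finite Fqm (Submodule.span Fqm (Set.range z)) := by infer_instance
    let b : Basis (Fin ζ) Fqm (Submodule.span Fqm (Set.range z)) :=
      Module.finBasisOfFinrankEq Fqm _ hz
    have hspan : Submodule.span Fqm (Set.range z)
        = Submodule.span Fqm (Set.range fun l : Fin ζ => (b l : Fin n → Fqm)) := by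
      have h1 := congrArg (Submodule.map (Submodule.span Fqm (Set.range z)).subtype) b.span_eq
      rw [Submodule.map_span, Submodule.map_subtype_top] at h1
      rw [← Set.range_comp] at h1
      exact h1.symm
    have hrows : ∀ pr : Fin u × Fin s, M pr ∈ Submodule.span Fqm
        (Set.range fun (lt : Fin ζ × Fin s) => fun j => (b lt.1 : Fin n → Fqm) j ^ q ^ (lt.2 : ℕ)) := by
      rintro ⟨i, t⟩
      have hzi : z i ∈ Submodule.span Fqm (Set.range fun l : Fin ζ => (b l : Fin n → Fqm)) := by
        rw [← hspan]; exact Submodule.subset_span ⟨i, rfl⟩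
      have := key ζ (fun l => (b l : Fin n → Fqm)) (z i) hzi (t : ℕ)
      refine Submodule.span_mono ?_ this
      rintro x ⟨l, rfl⟩
      exact ⟨(l, t), rfl⟩
    have := rank_le_of_rows_mem M _ hrows
    simpa using this
  refine ⟨part1, ?_⟩
  intro B hB hBz
  refine le_min part1 ?_
  -- Part 2: rows lie in span of the w rows of B (entries fixed by Frobenius)
  have hrows : ∀ pr : Fin u × Fin s, M pr ∈ Submodule.span Fqm
      (Set.range fun r : Fin w => fun j : Fin n => algebraMap Fq Fqm (B r j)) := by
    rintro ⟨i, t⟩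
    have := key w (fun r j => algebraMap Fq Fqm (B r j)) (z i) (hBz i) (t : ℕ)
    have heq : (fun (l : Fin w) => fun j => (algebraMap Fq Fqm (B l j)) ^ q ^ (t : ℕ))
        = fun r : Fin w => fun j : Fin n => algebraMap Fq Fqm (B r j) := by
      funext l j
      have hfix : B l j ^ q ^ (t : ℕ) = B l j := by
        rw [← hcard]; exact FiniteField.pow_card_pow _ _
      rw [← map_pow, hfix]
    rw [heq] at this
    exact this
  have := rank_le_of_rows_mem M _ hrows
  simpa using this
end

section
/- Every F_{q^m}-linear MRD code of length n ≤ m and dimension k ≥ 1 over F_{q^m} contains at least q^{m(k-1)} codewords of F_q-rank equal to n. Consequently, such a code has a basis consisting of codewords of full F_q-rank n. -/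
/-- The `F_q`-rank of a vector over an extension field: the dimension over `F_q` of the
`F_q`-span of its coordinates (equivalently, the rank of its matrix expansion over `F_q`). -/
noncomputable def rankq (Fq : Type) {Fqm : Type} [Field Fq] [Field Fqm] [Algebra Fq Fqm]
    {n : ℕ} (v : Fin n → Fqm) : ℕ :=
  Module.finrank Fq (Submodule.span Fq (Set.range v))

/-!
A codeword `c` has `F_q`-rank less than `n` exactly when `∑ lᵢ cᵢ = 0` for some nonzero
`l ∈ F_q^n`. No such check functional vanishes on a `k`-dimensional MRD code: pick `j` with
`lⱼ ≠ 0`; a nonzero codeword vanishing on `k - 1` coordinates other than `j` and also killed by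
`l` would have rank at most `n - k`. So each of the `q^n - 1 ≤ q^m - 1` check functionals
kills only a hyperplane of `q^{m(k-1)}` codewords, and at least
`q^{mk} - (q^m - 1) q^{m(k-1)} = q^{m(k-1)}` codewords have full rank. These are nonzero and
too many to lie in a proper subspace, so they span the code and contain a basis of it.
-/

open Module Submodule

theorem finrank_range_lt_of_sum_smul_eq_zero {K M ι : Type*} [Field K] [AddCommGroup M]
    [Module K M] [Fintype ι] {v : ι → M} {S : Finset ι} (hS : ∀ i ∈ S, v i = 0)
    {l : ι → K} (hl : ∑ i, l i • v i = 0) {j : ι} (hjS : j ∉ S) (hlj : l j ≠ 0) :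
    (Set.range v).finrank K < Fintype.card ι - S.card := by
  classical
  let w : (Sᶜ : Finset ι) → M := fun i => v i
  have hspan : (Set.range v).finrank K ≤ (Set.range w).finrank K := by
    have := Module.Finite.span_of_finite K (Set.finite_range w)
    refine Submodule.finrank_mono (span_le.mpr ?_)
    rintro _ ⟨i, rfl⟩
    by_cases hi : i ∈ S
    · simp [hS i hi]
    · exact subset_span ⟨⟨i, Finset.mem_compl.mpr hi⟩, rfl⟩
  have hw : ¬ LinearIndependent K w := by
    refine Fintype.not_linearIndependent_iff.mpr
      ⟨fun i => l i, ?_, ⟨j, Finset.mem_compl.mpr hjS⟩, hlj⟩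
    have hsplit := Finset.sum_compl_add_sum S (fun i => l i • v i)
    rw [Finset.sum_eq_zero (s := S) fun i hi => by simp [hS i hi], add_zero, hl] at hsplit
    rwa [Finset.sum_coe_sort Sᶜ (fun i => l i • v i)]
  have hlt : (Set.range w).finrank K < Fintype.card (Sᶜ : Finset ι) :=
    (finrank_range_le_card w).lt_of_ne fun h =>
      hw (linearIndependent_iff_card_eq_finrank_span.mpr h.symm)
  rw [Fintype.card_coe, Finset.card_compl] at hlt
  exact hspan.trans_lt hlt

theorem exists_ne_zero_mem_forall_mem_eq_zero {L ι : Type*} [Field L] [Fintype ι]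
    (C : Submodule L (ι → L)) (S : Finset ι) (hS : S.card < finrank L C) :
    ∃ c ∈ C, c ≠ 0 ∧ ∀ i ∈ S, c i = 0 := by
  let restrict : C →ₗ[L] (S → L) := (LinearMap.funLeft L L ((↑) : S → ι)).comp C.subtype
  have hker : LinearMap.ker restrict ≠ ⊥ :=
    LinearMap.ker_ne_bot_of_finrank_lt (by rwa [finrank_fintype_fun_eq_card, Fintype.card_coe])
  obtain ⟨c, hc, hc0⟩ := (Submodule.ne_bot_iff _).mp hker
  refine ⟨c, c.2, fun h => hc0 (Subtype.ext h), fun i hi => ?_⟩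
  simpa [restrict] using congrFun hc ⟨i, hi⟩

section FiniteField

variable {F V ι : Type*} [Field F] [AddCommGroup V] [Module F V] [FiniteDimensional F V]

theorem natCard_ker_of_ne_zero {f : Dual F V} (hf : f ≠ 0) :
    Nat.card (LinearMap.ker f) = Nat.card F ^ (finrank F V - 1) := by
  rw [natCard_eq_pow_finrank (K := F), ← Dual.finrank_ker_add_one_of_ne_zero hf,
    Nat.add_sub_cancel]

theorem le_natCard_forall_apply_ne_zero [Finite F] [Finite ι] (f : ι → Dual F V)
    (hf : ∀ i, f i ≠ 0) (hV : 0 < finrank F V) :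
    (Nat.card F - Nat.card ι) * Nat.card F ^ (finrank F V - 1) ≤
      Nat.card {v : V // ∀ i, f i v ≠ 0} := by
  classical
  have : Fintype ι := Fintype.ofFinite ι
  have : Finite V := Module.finite_of_finite F
  have : Fintype V := Fintype.ofFinite V
  have hbad : (Finset.univ.filter fun v : V => ¬ ∀ i, f i v ≠ 0).card ≤
      Nat.card ι * Nat.card F ^ (finrank F V - 1) := by
    calc _ ≤ (Finset.univ.biUnion fun i => (LinearMap.ker (f i) : Set V).toFinset).card := by
          refine Finset.card_le_card fun v hv => ?_
          simpa using hv
      _ ≤ ∑ i, ((LinearMap.ker (f i) : Set V).toFinset).card := Finset.card_biUnion_le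
      _ = Nat.card ι * Nat.card F ^ (finrank F V - 1) := by
          simp only [Set.toFinset_card, SetLike.coe_sort_coe, ← Nat.card_eq_fintype_card,
            natCard_ker_of_ne_zero (hf _), Finset.sum_const, Finset.card_univ, smul_eq_mul]
  have hsplit := Finset.card_filter_add_card_filter_not (s := Finset.univ)
    fun v : V => ∀ i, f i v ≠ 0
  rw [Finset.card_univ, ← Nat.card_eq_fintype_card, natCard_eq_pow_finrank (K := F),
    ← Fintype.card_subtype, ← Nat.card_eq_fintype_card] at hsplit
  have hpow : Nat.card F ^ finrank F V = Nat.card F * Nat.card F ^ (finrank F V - 1) := by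
    rw [← pow_succ', Nat.sub_add_cancel hV]
  rw [Nat.sub_mul]
  omega

theorem span_eq_top_of_pow_le_natCard [Finite F] {A : Set V} (h0 : (0 : V) ∉ A)
    (hA : Nat.card F ^ (finrank F V - 1) ≤ Nat.card A) : span F A = ⊤ := by
  have : Finite V := Module.finite_of_finite F
  by_contra hne
  have hW : Nat.card (span F A) ≤ Nat.card F ^ (finrank F V - 1) := by
    rw [natCard_eq_pow_finrank (K := F)]
    have := Submodule.finrank_lt hne
    exact Nat.pow_le_pow_right Finite.card_pos (by omega)
  have hsub : insert (0 : V) A ⊆ span F A := Set.insert_subset (zero_mem _) subset_span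
  have hcard := Set.ncard_le_ncard hsub (Set.toFinite _)
  rw [Set.ncard_insert_of_notMem h0 (Set.toFinite _), ← Nat.card_coe_set_eq,
    ← Nat.card_coe_set_eq, SetLike.coe_sort_coe] at hcard
  omega

theorem exists_basis_fin_finrank_forall_mem {A : Set V} (hA : span F A = ⊤) :
    ∃ b : Basis (Fin (finrank F V)) F V, ∀ i, b i ∈ A := by
  let b := Basis.ofSpan hA.ge
  exact ⟨b.reindex (b.indexEquiv (finBasis F V)),
    fun i => Basis.ofSpan_subset hA.ge (by simp [b])⟩

end FiniteField

section RankMetric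

variable (K : Type) {L : Type} [Field K] [Field L] [Algebra K L] {n : ℕ}

/-- Minimum rank distance at least `n - k + 1`; by the Singleton bound it is then equal. -/
def IsMRD (C : Submodule L (Fin n → L)) : Prop :=
  ∀ c ∈ C, c ≠ 0 → n - finrank L C + 1 ≤ rankq K c

def checkFunctional (l : Fin n → K) : (Fin n → L) →ₗ[L] L :=
  ∑ i, l i • LinearMap.proj i

variable {K}

theorem checkFunctional_apply (l : Fin n → K) (v : Fin n → L) :
    checkFunctional K l v = ∑ i, l i • v i := by
  simp [checkFunctional]

theorem rankq_eq_iff_linearIndependent {v : Fin n → L} :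
    rankq K v = n ↔ LinearIndependent K v := by
  rw [linearIndependent_iff_card_eq_finrank_span, Fintype.card_fin, eq_comm]
  rfl

theorem rankq_eq_iff_forall_checkFunctional_ne_zero {v : Fin n → L} :
    rankq K v = n ↔ ∀ l : Fin n → K, l ≠ 0 → checkFunctional K l v ≠ 0 := by
  simp_rw [rankq_eq_iff_linearIndependent, Fintype.linearIndependent_iff, checkFunctional_apply]
  exact ⟨fun h l hl h0 => hl (funext (h l h0)),
    fun h g hg => funext_iff.mp (not_imp_not.mp (h g) hg)⟩

theorem IsMRD.exists_mem_checkFunctional_ne_zero {C : Submodule L (Fin n → L)}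
    (hMRD : IsMRD K C) (hC : 0 < finrank L C) {l : Fin n → K} (hl : l ≠ 0) :
    ∃ c ∈ C, checkFunctional K l c ≠ 0 := by
  classical
  obtain ⟨j, hj⟩ := Function.ne_iff.mp hl
  have hkn : finrank L C ≤ n := C.finrank_le.trans_eq (finrank_fin_fun L)
  obtain ⟨S, hSj, hScard⟩ : ∃ S ⊆ Finset.univ.erase j, S.card = finrank L C - 1 :=
    Finset.exists_subset_card_eq (by simp; omega)
  obtain ⟨c, hcC, hc0, hcS⟩ := exists_ne_zero_mem_forall_mem_eq_zero C S (by omega)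
  refine ⟨c, hcC, fun hlc => ?_⟩
  have hlt := finrank_range_lt_of_sum_smul_eq_zero hcS
    ((checkFunctional_apply l c).symm.trans hlc) (fun h => by simpa using hSj h) hj
  have hge : n - finrank L C + 1 ≤ (Set.range c).finrank K := hMRD c hcC hc0
  rw [Fintype.card_fin, hScard] at hlt
  omega

theorem IsMRD.le_natCard_rankq_eq [Finite K] [FiniteDimensional K L]
    {C : Submodule L (Fin n → L)} (hMRD : IsMRD K C) (hC : 0 < finrank L C)
    (hnL : n ≤ finrank K L) :
    Nat.card L ^ (finrank L C - 1) ≤ Nat.card {c : C // rankq K (c : Fin n → L) = n} := by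
  have : Finite L := Module.finite_of_finite K
  let f : {l : Fin n → K // l ≠ 0} → Dual L C := fun l =>
    (checkFunctional K l.1).comp C.subtype
  have hf : ∀ l, f l ≠ 0 := fun l hl => by
    obtain ⟨c, hcC, hc⟩ := hMRD.exists_mem_checkFunctional_ne_zero hC l.2
    exact hc (LinearMap.congr_fun hl ⟨c, hcC⟩)
  have hfull : Nat.card {c : C // rankq K (c : Fin n → L) = n} =
      Nat.card {c : C // ∀ l, f l c ≠ 0} :=
    Nat.card_congr <| Equiv.subtypeEquivRight fun c => by
      simp [f, rankq_eq_iff_forall_checkFunctional_ne_zero]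
  have hfewer : Nat.card {l : Fin n → K // l ≠ 0} < Nat.card L :=
    calc _ < Nat.card (Fin n → K) := Finite.card_subtype_lt (p := (· ≠ 0)) (x := 0) (by simp)
      _ = Nat.card K ^ n := by rw [Nat.card_fun, Nat.card_fin]
      _ ≤ Nat.card K ^ finrank K L := Nat.pow_le_pow_right Finite.card_pos hnL
      _ = Nat.card L := (natCard_eq_pow_finrank (K := K)).symm
  calc _ ≤ (Nat.card L - Nat.card {l : Fin n → K // l ≠ 0}) *
          Nat.card L ^ (finrank L C - 1) := Nat.le_mul_of_pos_left _ (by omega)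
    _ ≤ _ := hfull ▸ le_natCard_forall_apply_ne_zero f hf hC

end RankMetric

theorem mrd_basis_of_full_rank_codewords_general (q m n k : ℕ)
    (Fq Fqm : Type) [Field Fq] [Fintype Fq] [Field Fqm] [Algebra Fq Fqm]
    (hcard : Fintype.card Fq = q) (hfin : Module.finrank Fq Fqm = m)
    (hnm : n ≤ m) (hk : 1 ≤ k)
    (C : Submodule Fqm (Fin n → Fqm)) (hdim : Module.finrank Fqm C = k)
    (hMRD : ∀ c ∈ C, c ≠ 0 → n - k + 1 ≤ rankq Fq c) :
    q ^ (m * (k - 1)) ≤ Nat.card {c : C // rankq Fq (c : Fin n → Fqm) = n} ∧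
    ∃ b : Module.Basis (Fin k) Fqm C, ∀ i, rankq Fq ((b i : Fin n → Fqm)) = n := by
  subst hdim
  have hkn : finrank Fqm C ≤ n := C.finrank_le.trans_eq (finrank_fin_fun Fqm)
  have : FiniteDimensional Fq Fqm := .of_finrank_pos (by omega)
  have : Finite Fqm := Module.finite_of_finite Fq
  have hcardL : Nat.card Fqm ^ (finrank Fqm C - 1) = q ^ (m * (finrank Fqm C - 1)) := by
    rw [natCard_eq_pow_finrank (K := Fq), Nat.card_eq_fintype_card, hcard, hfin, pow_mul]
  have hfull : q ^ (m * (finrank Fqm C - 1)) ≤ _ :=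
    hcardL ▸ IsMRD.le_natCard_rankq_eq hMRD hk (hfin ▸ hnm)
  refine ⟨hfull, ?_⟩
  have hzero : (0 : C) ∉ {c : C | rankq Fq (c : Fin n → Fqm) = n} := fun h =>
    (rankq_eq_iff_linearIndependent.mp h).ne_zero ⟨0, by omega⟩ rfl
  exact exists_basis_fin_finrank_forall_mem (span_eq_top_of_pow_le_natCard hzero (hcardL ▸ hfull))

/-- Every `F_{q^m}`-linear MRD code of length `n ≤ m` and dimension `k ≥ 1`
contains at least `q^{m(k-1)}` codewords of full `F_q`-rank `n`, and consequently has a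
basis consisting of codewords of full `F_q`-rank `n`. -/
theorem mrd_basis_of_full_rank_codewords (q m n k : ℕ)
    (Fq Fqm : Type) [Field Fq] [Fintype Fq] [Field Fqm] [Algebra Fq Fqm]
    (hcard : Fintype.card Fq = q) (hfin : Module.finrank Fq Fqm = m)
    (hn : 0 < n) (hnm : n ≤ m) (hk : 1 ≤ k) (hkn : k ≤ n)
    (C : Submodule Fqm (Fin n → Fqm)) (hdim : Module.finrank Fqm C = k)
    (hMRD : ∀ c ∈ C, c ≠ 0 → n - k + 1 ≤ rankq Fq c) :
    q ^ (m * (k - 1)) ≤ Nat.card {c : C // rankq Fq (c : Fin n → Fqm) = n} ∧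
    ∃ b : Module.Basis (Fin k) Fqm C, ∀ i, rankq Fq ((b i : Fin n → Fqm)) = n :=
  mrd_basis_of_full_rank_codewords_general q m n k Fq Fqm hcard hfin hnm hk C hdim hMRD
end

section
/- Let E_1, E_2 be matrices of the same size over F_q with column spaces C_1, C_2 and row spaces R_1, R_2. If dim(C_1 ∩ C_2) = i and dim(R_1 ∩ R_2) = j, then rank(E_1) + rank(E_2) - i - j ≤ rank(E_1 + E_2) ≤ rank(E_1) + rank(E_2) - max(i, j). -/
/-!
Grassmann's formula gives the upper bound: the column space of `E₁ + E₂` lies in `C₁ + C₂`,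
of dimension `rank E₁ + rank E₂ - i`, and likewise for rows. For the lower bound, `E₁ + E₂` is
the map `x ↦ (E₁ x, E₂ x)` followed by addition `(a, b) ↦ a + b`. The image `P` of the first
map is the column space of the stacked matrix `[E₁; E₂]`, of dimension
`dim (R₁ + R₂) = rank E₁ + rank E₂ - j`, and the kernel of addition on `P` consists of pairs
`(a, -a)` with `a ∈ C₁ ∩ C₂`, so addition loses at most `i` dimensions.
-/

open Matrix Module Submodule LinearMap

section

variable {K V W : Type*} [DivisionRing K] [AddCommGroup V] [Module K V]
  [AddCommGroup W] [Module K W]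

theorem Submodule.finrank_map_add_finrank_inf_ker [FiniteDimensional K V]
    (P : Submodule K V) (σ : V →ₗ[K] W) :
    finrank K (P.map σ) + finrank K ↥(P ⊓ ker σ) = finrank K P := by
  have h := (σ ∘ₗ P.subtype).finrank_range_add_finrank_ker
  rwa [range_comp, range_subtype, ker_comp, ← finrank_map_subtype_eq P,
    map_comap_subtype] at h

variable [FiniteDimensional K W]

theorem LinearMap.finrank_range_add_add_finrank_inf_le (f g : V →ₗ[K] W) :
    finrank K (range (f + g)) + finrank K ↥(range f ⊓ range g) ≤
      finrank K (range f) + finrank K (range g) := by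
  have := Submodule.finrank_sup_add_finrank_inf_eq (range f) (range g)
  have := Submodule.finrank_mono (range_add_le f g)
  omega

theorem LinearMap.finrank_range_prod_le (f g : V →ₗ[K] W) :
    finrank K (range (f.prod g)) ≤ finrank K (range (f + g)) + finrank K ↥(range f ⊓ range g) := by
  let σ : W × W →ₗ[K] W := coprod id id
  have hσ : σ ∘ₗ f.prod g = f + g := by ext; simp [σ]
  have hker : range (f.prod g) ⊓ ker σ ≤ (range f ⊓ range g).map (id.prod (-id)) := by
    rintro _ ⟨⟨y, rfl⟩, hy⟩
    have hy : f y + g y = 0 := by simpa [σ] using hy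
    refine ⟨f y, ⟨⟨y, rfl⟩, -y, ?_⟩, ?_⟩
    · rw [map_neg, neg_eq_iff_add_eq_zero, add_comm, hy]
    · simp [eq_neg_of_add_eq_zero_right hy]
  have := Submodule.finrank_map_add_finrank_inf_ker (range (f.prod g)) σ
  rw [← range_comp, hσ] at this
  have := (Submodule.finrank_mono hker).trans (Submodule.finrank_map_le _ _)
  omega

end

namespace Matrix

variable {K : Type*} [Field K] {m m₁ m₂ n : Type*} [Fintype m] [Fintype n]

theorem rank_fromRows [Finite m₁] [Finite m₂] (A₁ : Matrix m₁ n K) (A₂ : Matrix m₂ n K) :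
    (fromRows A₁ A₂).rank = finrank K ↥(span K (Set.range A₁) ⊔ span K (Set.range A₂)) := by
  rw [rank_eq_finrank_span_row, ← span_union]
  exact congrArg (fun s ↦ finrank K (span K s)) (Set.Sum.elim_range A₁ A₂)

theorem rank_fromRows_eq_finrank_range_prod (A₁ : Matrix m₁ n K) (A₂ : Matrix m₂ n K) :
    (fromRows A₁ A₂).rank = finrank K (range (A₁.mulVecLin.prod A₂.mulVecLin)) := by
  have h : (fromRows A₁ A₂).mulVecLin =
      (LinearEquiv.sumArrowLequivProdArrow m₁ m₂ K K).symm ∘ₗ A₁.mulVecLin.prod A₂.mulVecLin := by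
    ext v i
    cases i <;> simp [fromRows_mulVec]
  rw [rank, h, range_comp, LinearEquiv.finrank_map_eq]

theorem rank_add_add_finrank_inf_span_cols_le (A B : Matrix m n K) :
    (A + B).rank + finrank K ↥(span K (Set.range Aᵀ) ⊓ span K (Set.range Bᵀ)) ≤
      A.rank + B.rank := by
  have h := A.mulVecLin.finrank_range_add_add_finrank_inf_le B.mulVecLin
  rw [← mulVecLin_add, range_mulVecLin A, range_mulVecLin B] at h
  rw [rank_eq_finrank_span_cols A, rank_eq_finrank_span_cols B]
  exact h

theorem rank_add_add_finrank_inf_span_rows_le (A B : Matrix m n K) :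
    (A + B).rank + finrank K ↥(span K (Set.range A) ⊓ span K (Set.range B)) ≤
      A.rank + B.rank := by
  have h := rank_add_add_finrank_inf_span_cols_le Aᵀ Bᵀ
  rwa [← transpose_add, rank_transpose, rank_transpose, rank_transpose, transpose_transpose,
    transpose_transpose] at h

theorem rank_add_rank_le_rank_add_add_finrank_inf_add_finrank_inf (A B : Matrix m n K) :
    A.rank + B.rank ≤ (A + B).rank + finrank K ↥(span K (Set.range Aᵀ) ⊓ span K (Set.range Bᵀ)) +
      finrank K ↥(span K (Set.range A) ⊓ span K (Set.range B)) := by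
  have h := A.mulVecLin.finrank_range_prod_le B.mulVecLin
  rw [← mulVecLin_add, range_mulVecLin A, range_mulVecLin B,
    ← rank_fromRows_eq_finrank_range_prod, rank_fromRows] at h
  replace h : finrank K ↥(span K (Set.range A) ⊔ span K (Set.range B)) ≤
      (A + B).rank + finrank K ↥(span K (Set.range Aᵀ) ⊓ span K (Set.range Bᵀ)) := h
  have := Submodule.finrank_sup_add_finrank_inf_eq (span K (Set.range A)) (span K (Set.range B))
  have hA : A.rank = finrank K (span K (Set.range A)) := rank_eq_finrank_span_row A
  have hB : B.rank = finrank K (span K (Set.range B)) := rank_eq_finrank_span_row B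
  omega

end Matrix

/-- Marsaglia's bound: For matrices `E₁, E₂` over a field with column spaces
`C₁, C₂` and row spaces `R₁, R₂`, if `dim(C₁ ⊓ C₂) = i` and `dim(R₁ ⊓ R₂) = j`, then
`rank E₁ + rank E₂ - i - j ≤ rank(E₁+E₂) ≤ rank E₁ + rank E₂ - max i j`. -/
theorem rank_sum_marsaglia (F : Type) [Field F] (m n : ℕ)
    (E1 E2 : Matrix (Fin m) (Fin n) F) (i j : ℕ)
    (hC : Module.finrank F
        ↥(Submodule.span F (Set.range E1ᵀ) ⊓ Submodule.span F (Set.range E2ᵀ)) = i)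
    (hR : Module.finrank F
        ↥(Submodule.span F (Set.range E1) ⊓ Submodule.span F (Set.range E2)) = j) :
    ((E1.rank : ℤ) + (E2.rank : ℤ) - (i : ℤ) - (j : ℤ) ≤ ((E1 + E2).rank : ℤ)) ∧
    (((E1 + E2).rank : ℤ) ≤ (E1.rank : ℤ) + (E2.rank : ℤ) - (max i j : ℤ)) := by
  have hcols := E1.rank_add_add_finrank_inf_span_cols_le E2
  have hrows := E1.rank_add_add_finrank_inf_span_rows_le E2
  have hlower := E1.rank_add_rank_le_rank_add_add_finrank_inf_add_finrank_inf E2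
  rw [hC] at hcols hlower
  rw [hR] at hrows hlower
  omega
end

section
/- The min-entropy of the LIGA encryption is at least γ = m(t_pub - u)·log_2(q) + t_pub(n - t_pub - 1)·log_2(q): for every plaintext m, public key pk, and candidate ciphertext c, the probability over the encryption randomness (uniformly random α ∈ F_{q^{mu}}\{0} and uniformly random e of F_q-rank t_pub) that Encrypt(m, pk) = c is at most q^{-m(t_pub-u) - t_pub(n-t_pub-1)}. -/
open Module Submodule Set

theorem Nat.pow_pred_le_pow_sub_pow {q m i : ℕ} (hq : 2 ≤ q) (hi : i < m) :
    q ^ (m - 1) ≤ q ^ m - q ^ i := by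
  obtain ⟨m, rfl⟩ := Nat.exists_eq_add_of_lt hi
  have hle : q ^ i ≤ q ^ (i + m) := Nat.pow_le_pow_right (by omega) (by omega)
  have hdouble : q ^ (i + m) * 2 ≤ q ^ (i + m) * q := Nat.mul_le_mul_left _ hq
  rw [show i + m + 1 - 1 = i + m by omega, pow_succ]
  omega

theorem Nat.pow_mul_pred_le_prod_pow_sub_pow {q m t : ℕ} (hq : 2 ≤ q) (ht : t ≤ m) :
    q ^ (t * (m - 1)) ≤ ∏ i : Fin t, (q ^ m - q ^ (i : ℕ)) := by
  calc q ^ (t * (m - 1)) = ∏ _i : Fin t, q ^ (m - 1) := by simp [pow_mul']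
    _ ≤ _ := Finset.prod_le_prod' fun i _ => Nat.pow_pred_le_pow_sub_pow hq (by omega)

section RankCount

variable {K V : Type*} [Field K] [AddCommGroup V] [Module K V]

theorem span_range_append_linearCombination {t r : ℕ} (s : Fin t → V) (a : Fin r → Fin t → K) :
    span K (range (Fin.append s (Fintype.linearCombination K s ∘ a))) = span K (range s) := by
  refine le_antisymm (span_le.2 ?_) (span_mono ?_)
  · rintro _ ⟨i, rfl⟩
    induction i using Fin.addCases with
    | left i => simpa only [Fin.append_left] using subset_span (mem_range_self i)
    | right j =>
      simp only [Fin.append_right, Function.comp_apply, SetLike.mem_coe,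
        ← Fintype.range_linearCombination]
      exact LinearMap.mem_range_self _ _
  · rintro _ ⟨i, rfl⟩
    exact ⟨Fin.castAdd r i, Fin.append_left _ _ i⟩

theorem injective_append_linearCombination {t r : ℕ} :
    Function.Injective fun p : {s : Fin t → V // LinearIndependent K s} × (Fin r → Fin t → K) =>
      Fin.append p.1.1 (Fintype.linearCombination K p.1.1 ∘ p.2) := by
  rintro ⟨⟨s, hs⟩, a⟩ ⟨⟨s', hs'⟩, a'⟩ h
  obtain rfl : s = s' := funext fun i => by simpa using congrFun h (Fin.castAdd r i)
  have ha : ∀ j, a j = a' j := fun j =>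
    hs.fintypeLinearCombination_injective (by simpa using congrFun h (Fin.natAdd t j))
  rw [funext ha]

theorem pow_le_card_finrank_span_range_eq [Fintype K] [Finite V] {t : ℕ} (r : ℕ)
    (ht : t ≤ finrank K V) :
    Fintype.card K ^ (t * (finrank K V - 1) + t * r) ≤
      Nat.card {e : Fin (t + r) → V // finrank K (span K (range e)) = t} := by
  let extend (p : {s : Fin t → V // LinearIndependent K s} × (Fin r → Fin t → K)) :
      {e : Fin (t + r) → V // finrank K (span K (range e)) = t} :=
    ⟨Fin.append p.1.1 (Fintype.linearCombination K p.1.1 ∘ p.2), by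
      rw [span_range_append_linearCombination, finrank_span_eq_card p.1.2, Fintype.card_fin]⟩
  have hq : 2 ≤ Fintype.card K := Fintype.one_lt_card
  calc _ = Fintype.card K ^ (t * (finrank K V - 1)) * Fintype.card K ^ (t * r) := pow_add _ _ _
    _ ≤ (∏ i : Fin t, (Fintype.card K ^ finrank K V - Fintype.card K ^ (i : ℕ))) *
          Nat.card (Fin r → Fin t → K) := by
      rw [show Nat.card (Fin r → Fin t → K) = Fintype.card K ^ (t * r) by simp [pow_mul]]
      gcongr
      exact Nat.pow_mul_pred_le_prod_pow_sub_pow hq ht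
    _ = Nat.card ({s : Fin t → V // LinearIndependent K s} × (Fin r → Fin t → K)) := by
      rw [Nat.card_prod, card_linearIndependent ht]
    _ ≤ _ := Nat.card_le_card_of_injective extend fun p p' h =>
      injective_append_linearCombination (congrArg Subtype.val h)

end RankCount

theorem card_fibre_div_card_prod_le_inv {A B C : Type*} [Finite A] (F : A → B → C)
    (hF : ∀ a, Function.Injective (F a)) (c : C) :
    (Nat.card {p : A × B // F p.1 p.2 = c} : ℝ) / Nat.card (A × B) ≤ (Nat.card B : ℝ)⁻¹ := by
  have hfibre : Nat.card {p : A × B // F p.1 p.2 = c} ≤ Nat.card A := by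
    refine Nat.card_le_card_of_injective (fun p => p.1.1) ?_
    rintro ⟨⟨a, b⟩, hb⟩ ⟨⟨a', b'⟩, hb'⟩ (rfl : a = a')
    obtain rfl := hF a (hb.trans hb'.symm)
    rfl
  rw [Nat.card_prod, Nat.cast_mul]
  rcases eq_or_ne (Nat.card A) 0 with hA | hA
  · simp [hA]
  calc _ ≤ (Nat.card A : ℝ) / (Nat.card A * Nat.card B) := by gcongr
    _ = (Nat.card B : ℝ)⁻¹ := by field_simp

theorem liga_encryption_gamma_spread_general (q m n k u tpub : ℕ)
    (Fq Fqm L : Type) [Field Fq] [Fintype Fq] [Field Fqm] [Fintype Fqm] [Field L] [Fintype L]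
    [Algebra Fq Fqm] [Algebra Fqm L]
    (hcard : Fintype.card Fq = q)
    (hm : Module.finrank Fq Fqm = m)
    (htpn : tpub + 1 ≤ n) (htpm : tpub ≤ m)
    (G : Matrix (Fin k) (Fin n) Fqm) (kpub : Fin n → L)
    (m0 : Fin k → Fqm)
    (c : Fin n → Fqm) :
    (Nat.card {p : {α : L // α ≠ 0} × {e : Fin n → Fqm // rankq Fq e = tpub} //
          Matrix.vecMul m0 G + (fun j => Algebra.trace Fqm L ((p.1.1 : L) * kpub j))
            + (p.2.1 : Fin n → Fqm) = c} : ℝ)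
        / (Nat.card ({α : L // α ≠ 0} × {e : Fin n → Fqm // rankq Fq e = tpub}) : ℝ)
      ≤ ((q : ℝ) ^ (m * (tpub - u) + tpub * (n - tpub - 1)))⁻¹ := by
  obtain ⟨r, rfl⟩ : ∃ r, n = tpub + r := ⟨n - tpub, by omega⟩
  have hq : 2 ≤ q := hcard ▸ Fintype.one_lt_card
  have hcount := pow_le_card_finrank_span_range_eq (K := Fq) (V := Fqm) r (hm ▸ htpm)
  rw [hcard, hm] at hcount
  have hexp : m * (tpub - u) + tpub * (tpub + r - tpub - 1) ≤ tpub * (m - 1) + tpub * r := by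
    rw [Nat.add_sub_cancel_left]
    rcases Nat.eq_zero_or_pos tpub with rfl | hpos
    · simp
    calc m * (tpub - u) + tpub * (r - 1) ≤ m * tpub + tpub * (r - 1) := by
          gcongr; exact Nat.sub_le _ _
      _ = tpub * (m - 1) + tpub * r := by
          zify [show 1 ≤ m by omega, show 1 ≤ r by omega]
          ring
  have hfibre := card_fibre_div_card_prod_le_inv
    (fun (α : {α : L // α ≠ 0}) (e : {e : Fin (tpub + r) → Fqm // rankq Fq e = tpub}) =>
      Matrix.vecMul m0 G + (fun j => Algebra.trace Fqm L (α.1 * kpub j)) + e.1)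
    (fun α => (add_right_injective _).comp Subtype.val_injective) c
  have hspread : (q : ℝ) ^ (m * (tpub - u) + tpub * (tpub + r - tpub - 1)) ≤
      Nat.card {e : Fin (tpub + r) → Fqm // rankq Fq e = tpub} := by
    exact_mod_cast (Nat.pow_le_pow_right (by omega) hexp).trans hcount
  exact hfibre.trans (inv_anti₀ (by positivity) hspread)

/-- γ-spreadness of LIGA encryption. For every plaintext `m0` (padded with
`u` zeros), public key `(G, kpub)` and candidate ciphertext `c`, the probability over the
uniformly random encryption randomness `(α, e)` (with `α ∈ F_{q^{mu}} \ {0}` and `e` of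
`F_q`-rank `t_pub`) that `(m0)·G + Tr(α kpub) + e = c` is at most
`q^{-m(t_pub-u) - t_pub(n-t_pub-1)}`. -/
theorem liga_encryption_gamma_spread (q m n k u tpub : ℕ)
    (Fq Fqm L : Type) [Field Fq] [Fintype Fq] [Field Fqm] [Fintype Fqm] [Field L] [Fintype L]
    [Algebra Fq Fqm] [Algebra Fqm L] [Algebra Fq L] [IsScalarTower Fq Fqm L]
    (hcard : Fintype.card Fq = q)
    (hm : Module.finrank Fq Fqm = m) (hu : Module.finrank Fqm L = u)
    (hutp : u ≤ tpub) (htpn : tpub + 1 ≤ n) (htpm : tpub ≤ m)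
    (G : Matrix (Fin k) (Fin n) Fqm) (kpub : Fin n → L)
    (m0 : Fin k → Fqm) (hm0 : ∀ i : Fin k, k - u ≤ (i : ℕ) → m0 i = 0)
    (c : Fin n → Fqm) :
    (Nat.card {p : {α : L // α ≠ 0} × {e : Fin n → Fqm // rankq Fq e = tpub} //
          Matrix.vecMul m0 G + (fun j => Algebra.trace Fqm L ((p.1.1 : L) * kpub j))
            + (p.2.1 : Fin n → Fqm) = c} : ℝ)
        / (Nat.card ({α : L // α ≠ 0} × {e : Fin n → Fqm // rankq Fq e = tpub}) : ℝ)
      ≤ ((q : ℝ) ^ (m * (tpub - u) + tpub * (n - tpub - 1)))⁻¹ :=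
  liga_encryption_gamma_spread_general q m n k u tpub Fq Fqm L hcard hm htpn htpm G kpub m0 c
end
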